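/- Suppose every Hamiltonian path of G from s to e exists only if the reduced graph has a Hamiltonian path P_R. Then any arc of the reduced graph that is not on P_R is a transitive arc: no Hamiltonian path of G from s to e uses an arc of G whose endpoints lie in two SCCs that are not consecutive on P_R. -/

import Mathlib

variable {V : Type*}

/-- Reachability in a directed graph given by arc relation `A`. -/
def Reach (A : V → V → Prop) : V → V → Prop := Relation.ReflTransGen A

/-- Two vertices are in the same strongly connected component. -/
def SameSCC (A : V → V → Prop) (u v : V) : Prop := Reach A u v ∧ Reach A v u

/-- The strongly connected component of a vertex. -/
def sccOf (A : V → V → Prop) (v : V) : Set V := {u | SameSCC A v u}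

/-- A set is a strongly connected component. -/
def IsSCC (A : V → V → Prop) (X : Set V) : Prop := ∃ v, X = sccOf A v

/-- Arcs of the reduced graph (condensation): between distinct SCCs joined by an arc of `A`. -/
def CondArc (A : V → V → Prop) (X Y : Set V) : Prop :=
  IsSCC A X ∧ IsSCC A Y ∧ X ≠ Y ∧ ∃ u ∈ X, ∃ v ∈ Y, A u v

/-- A directed graph is acyclic: no arc lies on a directed cycle. -/
def Acyclic (A : V → V → Prop) : Prop := ∀ u v, A u v → ¬ Reach A v u

/-- A Hamiltonian path of the digraph `A`, as a duplicate-free list visiting every vertex. -/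
def IsHamList (A : V → V → Prop) (p : List V) : Prop :=
  p.Chain' A ∧ p.Nodup ∧ ∀ v, v ∈ p

/-- A Hamiltonian path from `s` to `e`. -/
def IsHamPath (A : V → V → Prop) (s e : V) (p : List V) : Prop :=
  IsHamList A p ∧ p.head? = some s ∧ p.getLast? = some e

/-- A Hamiltonian path of the reduced graph: a duplicate-free list of SCCs, chained by
condensation arcs, containing every SCC. -/
def RHamPath (A : V → V → Prop) (P : List (Set V)) : Prop :=
  (∀ X ∈ P, IsSCC A X) ∧ P.Chain' (CondArc A) ∧ P.Nodup ∧ ∀ X, IsSCC A X → X ∈ P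

/-!
Write `X = sccOf u` and `Y = sccOf v`. Since `P_R` is a path of the condensation, every SCC on it
reaches every later one, so `Y` cannot precede `X` (that would put `u` and `v` in one SCC).
Hence `X` comes before `Y`, and as they are not consecutive, the SCC `Z` right after `X` lies
strictly between them: its vertices are reachable from `u` and reach `v`. A Hamiltonian path
using the arc `(u, v)` puts each vertex either before `u` (so it reaches `u`) or after `v` (so it
is reachable from `v`); a vertex of `Z` would then lie in `X` or in `Y`.
-/

namespace List

variable {α : Type*} {R : α → α → Prop} {l : List α} {x y w : α}

theorem IsChain.reflTransGen_of_pair_sublist (hl : l.IsChain R) (h : [x, y] <+ l) :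
    Relation.ReflTransGen R x y :=
  isChain_pair.mp ((hl.imp fun _ _ => .single).sublist h)

theorem IsChain.reflTransGen_or_of_pair_infix (hl : l.IsChain R) (h : [x, y] <:+: l)
    (hw : w ∈ l) : Relation.ReflTransGen R w x ∨ Relation.ReflTransGen R y w := by
  obtain ⟨s, t, rfl⟩ := h
  simp only [append_assoc, cons_append, nil_append, mem_append, mem_cons] at hw
  rcases hw with hw | rfl | rfl | hw
  · exact .inl (hl.reflTransGen_of_pair_sublist (by grind))
  · exact .inl .refl
  · exact .inr .refl
  · exact .inr (hl.reflTransGen_of_pair_sublist (by simp [hw]))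

theorem pair_sublist_or_pair_sublist (hx : x ∈ l) (hy : y ∈ l) (hxy : x ≠ y) :
    [x, y] <+ l ∨ [y, x] <+ l := by
  induction l with
  | nil => simp at hx
  | cons a t ih =>
    rcases mem_cons.mp hx with rfl | hxt
    · exact .inl ((singleton_sublist.mpr ((mem_cons.mp hy).resolve_left hxy.symm)).cons_cons x)
    rcases mem_cons.mp hy with rfl | hyt
    · exact .inr ((singleton_sublist.mpr hxt).cons_cons y)
    exact (ih hxt hyt).imp (·.cons a) (·.cons a)

theorem exists_pair_infix_of_pair_sublist (h : [x, y] <+ l) (hxy : ¬ [x, y] <:+: l) :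
    ∃ z, z ≠ y ∧ [x, z] <:+: l ∧ [z, y] <+ l := by
  induction l with
  | nil => simp at h
  | cons a t ih =>
    cases h with
    | cons _ h =>
      obtain ⟨z, hzy, hxz, hzy'⟩ := ih h fun h' => hxy (h'.trans (suffix_cons a t).isInfix)
      exact ⟨z, hzy, hxz.trans (suffix_cons a t).isInfix, hzy'.cons a⟩
    | cons_cons _ h =>
      obtain _ | ⟨b, t⟩ := t
      · simp at h
      have hby : b ≠ y := by rintro rfl; exact hxy (prefix_append [x, b] t).isInfix
      refine ⟨b, hby, (prefix_append [x, b] t).isInfix, ?_⟩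
      simp_all [eq_comm]

end List

variable {A : V → V → Prop}

lemma mem_sccOf_self (A : V → V → Prop) (v : V) : v ∈ sccOf A v :=
  ⟨.refl, .refl⟩

lemma sccOf_eq_of_mem {u v : V} (h : u ∈ sccOf A v) : sccOf A u = sccOf A v := by
  obtain ⟨hvu, huv⟩ := h
  ext w
  exact ⟨fun ⟨huw, hwu⟩ => ⟨hvu.trans huw, hwu.trans huv⟩,
    fun ⟨hvw, hwv⟩ => ⟨huv.trans hvw, hwv.trans hvu⟩⟩

lemma reach_of_reflTransGen_condArc {x y : V} {Y : Set V}
    (h : Relation.ReflTransGen (CondArc A) (sccOf A x) Y) (hy : y ∈ Y) : Reach A x y := by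
  induction h generalizing y with
  | refl => exact hy.1
  | tail _ hYZ ih =>
    obtain ⟨-, ⟨z, rfl⟩, -, a, ha, b, hb, hab⟩ := hYZ
    exact ((ih ha).tail hab).trans (hb.2.trans hy.1)

/-- Any arc of `G` whose endpoints lie in two SCCs that are not consecutive on the
reduced Hamiltonian path `P` is used by no Hamiltonian path of `G` from `s` to `e`. -/
theorem transitive_arc_infeasible (A : V → V → Prop) (s e : V)
    (P : List (Set V)) (hP : RHamPath A P)
    (u v : V) (hA : A u v) (hne : sccOf A u ≠ sccOf A v)
    (hnotconsec : ¬ [sccOf A u, sccOf A v] <:+: P) :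
    ∀ H : List V, IsHamPath A s e H → ¬ [u, v] <:+: H := by
  rintro H ⟨⟨hHchain, -, hHall⟩, -, -⟩ huv
  obtain ⟨hSCC, hPchain, hPnodup, hPall⟩ := hP
  rcases List.pair_sublist_or_pair_sublist (hPall _ ⟨u, rfl⟩) (hPall _ ⟨v, rfl⟩) hne
    with hUV | hVU
  · obtain ⟨Z, hZV, hUZ, hZV'⟩ := List.exists_pair_infix_of_pair_sublist hUV hnotconsec
    obtain ⟨z, rfl⟩ := hSCC Z (hUZ.subset (by simp))
    have hZU : sccOf A z ≠ sccOf A u := fun h => by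
      simpa [h] using hPnodup.sublist hUZ.sublist
    have hreach_uz : Reach A u z := reach_of_reflTransGen_condArc
      (.single (List.isChain_pair.mp (hPchain.infix hUZ))) (mem_sccOf_self A z)
    have hreach_zv : Reach A z v := reach_of_reflTransGen_condArc
      (hPchain.reflTransGen_of_pair_sublist hZV') (mem_sccOf_self A v)
    rcases hHchain.reflTransGen_or_of_pair_infix huv (hHall z) with hzu | hvz
    · exact hZU (sccOf_eq_of_mem ⟨hreach_uz, hzu⟩)
    · exact hZV (sccOf_eq_of_mem ⟨hvz, hreach_zv⟩)
  · have hvu : Reach A v u := reach_of_reflTransGen_condArc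
      (hPchain.reflTransGen_of_pair_sublist hVU) (mem_sccOf_self A u)
    exact hne (sccOf_eq_of_mem ⟨hvu, .single hA⟩)
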